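/- arXiv:2106.00618 — 6 statements merged into one kernel-verified Lean document; each statement's English description precedes it below -/
import Mathlib

section
/- Let κ be an uncountable cardinal and φ a nice filter assignment for κ such that (i) S_α is countable for all α ∈ κ∖ω, and (ii) for every countable I ⊆ κ∖ω the family {φ(i) : i ∈ I} is disjointly representable. Then the topology τ_φ is Hausdorff. -/
/-!
Close `{x, y}` under `α ↦ S α` to a countable set `J`, and pick pairwise disjoint
`B α ∈ φ α` for the indices `α ∈ J`, shrunk so as to avoid `x` and `y`. Declaring `B α`
to be the children of `α`, every point has at most one parent and `x`, `y` have none, so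
the descendants of `x` and of `y` form disjoint sets. Each of them contains `B α` for each
of its members `α`, hence is open.
-/

open Cardinal Set

/-- `F` is a free filter on the set `S`. -/
def IsFreeFilterOn {α : Type*} (F : Set (Set α)) (S : Set α) : Prop :=
  (∀ A ∈ F, A ⊆ S) ∧ S ∈ F ∧ ∅ ∉ F ∧
    (∀ A ∈ F, ∀ B, A ⊆ B → B ⊆ S → B ∈ F) ∧
    (∀ A ∈ F, ∀ B ∈ F, A ∩ B ∈ F) ∧
    (∀ A ⊆ S, (S \ A).Finite → A ∈ F)

open Function Relation

/-- The open sets of `τ_φ`, a topology on `κ = Iio κ.ord`. -/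
def filterOpens (κ : Cardinal) (S : Ordinal → Set Ordinal) (φ : Ordinal → Set (Set Ordinal)) :
    Set (Set Ordinal) :=
  {G | G ⊆ Iio κ.ord ∧ ∀ α ∈ G, Ordinal.omega0 ≤ α → G ∩ S α ∈ φ α}

namespace IsFreeFilterOn

variable {X : Type*} {F : Set (Set X)} {S A : Set X}

theorem subset_of_mem (hF : IsFreeFilterOn F S) (hA : A ∈ F) : A ⊆ S :=
  hF.1 A hA

theorem mem_of_superset (hF : IsFreeFilterOn F S) (hA : A ∈ F) {B : Set X} (hAB : A ⊆ B)
    (hBS : B ⊆ S) : B ∈ F :=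
  hF.2.2.2.1 A hA B hAB hBS

theorem diff_mem (hF : IsFreeFilterOn F S) (hA : A ∈ F) {t : Set X} (ht : t.Finite) :
    A \ t ∈ F := by
  have hSt : S \ t ∈ F := hF.2.2.2.2.2 _ sdiff_subset
    (ht.subset fun z hz => by_contra fun hzt => hz.2 ⟨hz.1, hzt⟩)
  have hAt : A ∩ (S \ t) = A \ t := by
    rw [← inter_sdiff_assoc, inter_eq_left.2 (hF.subset_of_mem hA)]
  exact hAt ▸ hF.2.2.2.2.1 A hA _ hSt

end IsFreeFilterOn

theorem Set.Countable.exists_superset_closed {X : Type*} {s : Set X} (hs : s.Countable)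
    (D : Set X) (f : X → Set X) (hf : ∀ a ∈ D, (f a).Countable) :
    ∃ J, s ⊆ J ∧ J.Countable ∧ ∀ a ∈ J ∩ D, f a ⊆ J := by
  set step : Set X → Set X := fun u => u ∪ ⋃ a ∈ u ∩ D, f a
  have hcount : ∀ n, (step^[n] s).Countable := by
    intro n
    induction n with
    | zero => exact hs
    | succ n ih =>
      rw [iterate_succ_apply']
      exact ih.union <| (ih.mono inter_subset_left).biUnion fun a ha => hf a ha.2
  refine ⟨⋃ n, step^[n] s, subset_iUnion (fun n => step^[n] s) 0, countable_iUnion hcount, ?_⟩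
  rintro a ⟨ha, haD⟩ z hz
  obtain ⟨n, hn⟩ := mem_iUnion.1 ha
  refine mem_iUnion.2 ⟨n + 1, ?_⟩
  rw [iterate_succ_apply']
  exact Or.inr (mem_biUnion ⟨hn, haD⟩ hz)

/-- In a forest, distinct roots have disjoint sets of descendants. -/
theorem Relation.disjoint_setOf_reflTransGen {X : Type*} {r : X → X → Prop}
    (hr : ∀ a b c, r a c → r b c → a = b) {x y : X} (hx : ∀ a, ¬ r a x) (hy : ∀ a, ¬ r a y)
    (hxy : x ≠ y) : Disjoint {z | ReflTransGen r x z} {z | ReflTransGen r y z} := by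
  rw [Set.disjoint_left]
  intro z hxz hyz
  induction hxz with
  | refl =>
    rcases hyz.cases_tail with rfl | ⟨c, -, hcx⟩
    · exact hxy rfl
    · exact hx c hcx
  | tail _ haz ih =>
    rcases hyz.cases_tail with rfl | ⟨c, hyc, hcz⟩
    · exact hy _ haz
    · exact ih (hr _ _ _ hcz haz ▸ hyc)

theorem exists_pairwise_disjoint_mem_diff {X : Type*} {S : X → Set X} {φ : X → Set (Set X)}
    {I : Set X} (hφ : ∀ α ∈ I, IsFreeFilterOn (φ α) (S α)) {A : X → Set X}
    (hA : ∀ α ∈ I, A α ∈ φ α) (hAdisj : ∀ i ∈ I, ∀ j ∈ I, i ≠ j → A i ∩ A j = ∅)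
    {F : Set X} (hF : F.Finite) :
    ∃ B : X → Set X, Pairwise (Disjoint on B) ∧ (∀ α ∈ I, B α ∈ φ α) ∧
      (∀ α ∉ I, B α = ∅) ∧ ∀ α, Disjoint (B α) F := by
  classical
  refine ⟨fun α => if α ∈ I then A α \ F else ∅, ?_, fun α hα => ?_, fun α hα => if_neg hα,
    fun α => ?_⟩
  · intro i j hij
    simp only [onFun]
    split_ifs with hi hj
    · exact (disjoint_iff_inter_eq_empty.2 (hAdisj i hi j hj hij)).mono sdiff_subset sdiff_subset
    all_goals simp
  · simpa only [if_pos hα] using (hφ α hα).diff_mem (hA α hα) hF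
  · dsimp only
    split_ifs
    · exact disjoint_sdiff_left
    · exact empty_disjoint F

theorem setOf_reflTransGen_mem_filterOpens {κ : Cardinal} {S : Ordinal → Set Ordinal}
    {φ : Ordinal → Set (Set Ordinal)} (hS : ∀ α ∈ Ico Ordinal.omega0 κ.ord, S α ⊆ Iio α)
    (hφ : ∀ α ∈ Ico Ordinal.omega0 κ.ord, IsFreeFilterOn (φ α) (S α)) {J : Set Ordinal}
    (hJ : ∀ α ∈ J ∩ Ico Ordinal.omega0 κ.ord, S α ⊆ J) {B : Ordinal → Set Ordinal}
    (hBφ : ∀ α ∈ J ∩ Ico Ordinal.omega0 κ.ord, B α ∈ φ α)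
    (hB : ∀ α ∉ J ∩ Ico Ordinal.omega0 κ.ord, B α = ∅) {x : Ordinal}
    (hx : x ∈ J ∩ Iio κ.ord) :
    {z | ReflTransGen (fun α z => z ∈ B α) x z} ∈ filterOpens κ S φ := by
  have hBS : ∀ α ∈ J ∩ Ico Ordinal.omega0 κ.ord, B α ⊆ S α := fun α hα =>
    (hφ α hα.2).subset_of_mem (hBφ α hα)
  have hsub : {z | ReflTransGen (fun α z => z ∈ B α) x z} ⊆ J ∩ Iio κ.ord := by
    intro z hz
    induction hz with
    | refl => exact hx
    | @tail α z _ hzα =>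
      by_cases hα : α ∈ J ∩ Ico Ordinal.omega0 κ.ord
      · have hzS := hBS α hα hzα
        exact ⟨hJ α hα hzS, (hS α hα.2 hzS).trans hα.2.2⟩
      · rw [hB α hα] at hzα
        exact hzα.elim
  refine ⟨fun z hz => (hsub hz).2, fun α hα hωα => ?_⟩
  have hαI : α ∈ J ∩ Ico Ordinal.omega0 κ.ord := ⟨(hsub hα).1, hωα, (hsub hα).2⟩
  exact (hφ α hαI.2).mem_of_superset (hBφ α hαI)
    (subset_inter (fun _ => hα.tail) (hBS α hαI)) inter_subset_right

theorem stmt1_general (κ : Cardinal)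
    (S : Ordinal → Set Ordinal) (φ : Ordinal → Set (Set Ordinal))
    (hS : ∀ α, Ordinal.omega0 ≤ α → α < κ.ord →
      S α ⊆ Set.Iio α ∧ (S α).Infinite ∧ (S α).Countable)
    (hφ : ∀ α, Ordinal.omega0 ≤ α → α < κ.ord → IsFreeFilterOn (φ α) (S α))
    (hdisj : ∀ I : Set Ordinal, I.Countable →
      I ⊆ {α | Ordinal.omega0 ≤ α ∧ α < κ.ord} →
      ∃ A : Ordinal → Set Ordinal, (∀ i ∈ I, A i ∈ φ i) ∧
        (∀ i ∈ I, ∀ j ∈ I, i ≠ j → A i ∩ A j = ∅)) :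
    ∀ x ∈ Set.Iio κ.ord, ∀ y ∈ Set.Iio κ.ord, x ≠ y →
      ∃ G ∈ {G : Set Ordinal | G ⊆ Set.Iio κ.ord ∧
          ∀ α ∈ G, Ordinal.omega0 ≤ α → G ∩ S α ∈ φ α},
        ∃ H ∈ {G : Set Ordinal | G ⊆ Set.Iio κ.ord ∧
          ∀ α ∈ G, Ordinal.omega0 ≤ α → G ∩ S α ∈ φ α},
          x ∈ G ∧ y ∈ H ∧ G ∩ H = ∅ := by
  intro x hx y hy hxy
  obtain ⟨J, hxyJ, hJc, hJ⟩ := (countable_singleton y).insert x |>.exists_superset_closed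
    (Ico Ordinal.omega0 κ.ord) S fun α hα => (hS α hα.1 hα.2).2.2
  obtain ⟨A, hA, hAdisj⟩ := hdisj _ (hJc.mono inter_subset_left) inter_subset_right
  obtain ⟨B, hBdisj, hBφ, hB, hBavoid⟩ := exists_pairwise_disjoint_mem_diff
    (fun α hα => hφ α hα.2.1 hα.2.2) hA hAdisj (toFinite {x, y})
  have hopen : ∀ z ∈ J ∩ Iio κ.ord,
      {w | ReflTransGen (fun α w => w ∈ B α) z w} ∈ filterOpens κ S φ :=
    fun z => setOf_reflTransGen_mem_filterOpens (fun α hα => (hS α hα.1 hα.2).1)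
      (fun α hα => hφ α hα.1 hα.2) hJ hBφ hB
  have hroot : ∀ z ∈ ({x, y} : Set Ordinal), ∀ α, z ∉ B α := fun z hz α hzα =>
    disjoint_left.1 (hBavoid α) hzα hz
  refine ⟨_, hopen x ⟨hxyJ (mem_insert x _), hx⟩, _, hopen y ⟨hxyJ (mem_insert_of_mem x rfl), hy⟩,
    ReflTransGen.refl, ReflTransGen.refl, disjoint_iff_inter_eq_empty.1 ?_⟩
  refine disjoint_setOf_reflTransGen (fun a b c hca hcb => hBdisj.eq fun hab => ?_)
    (hroot x (mem_insert x _)) (hroot y (mem_insert_of_mem x rfl)) hxy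
  exact disjoint_left.1 hab hca hcb

/-- if `φ` is a nice filter assignment for the uncountable cardinal `κ`
such that each `S_α` is countable and every countable subfamily of the filters is
disjointly representable, then the topology `τ_φ` is Hausdorff. -/
theorem stmt1 (κ : Cardinal) (hκ : ℵ₀ < κ)
    (S : Ordinal → Set Ordinal) (φ : Ordinal → Set (Set Ordinal))
    (hS : ∀ α, Ordinal.omega0 ≤ α → α < κ.ord →
      S α ⊆ Set.Iio α ∧ (S α).Infinite ∧ (S α).Countable)
    (hφ : ∀ α, Ordinal.omega0 ≤ α → α < κ.ord → IsFreeFilterOn (φ α) (S α))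
    (hdisj : ∀ I : Set Ordinal, I.Countable →
      I ⊆ {α | Ordinal.omega0 ≤ α ∧ α < κ.ord} →
      ∃ A : Ordinal → Set Ordinal, (∀ i ∈ I, A i ∈ φ i) ∧
        (∀ i ∈ I, ∀ j ∈ I, i ≠ j → A i ∩ A j = ∅)) :
    ∀ x ∈ Set.Iio κ.ord, ∀ y ∈ Set.Iio κ.ord, x ≠ y →
      ∃ G ∈ {G : Set Ordinal | G ⊆ Set.Iio κ.ord ∧
          ∀ α ∈ G, Ordinal.omega0 ≤ α → G ∩ S α ∈ φ α},
        ∃ H ∈ {G : Set Ordinal | G ⊆ Set.Iio κ.ord ∧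
          ∀ α ∈ G, Ordinal.omega0 ≤ α → G ∩ S α ∈ φ α},
          x ∈ G ∧ y ∈ H ∧ G ∩ H = ∅ :=
  stmt1_general κ S φ hS hφ hdisj
end

section
/- Every countable family of weak P-points in ω* is disjointly representable: if {u_n : n < ω} are pairwise distinct free ultrafilters on ω each of which is a weak P-point, then there exist pairwise disjoint sets A_n ⊆ ω with A_n ∈ u_n for all n. -/
open Filter Set

/-- A free (nonprincipal) ultrafilter on `ℕ`. -/
def IsFreeUltrafilter (u : Ultrafilter ℕ) : Prop :=
  Filter.cofinite ≤ (u : Filter ℕ)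

/-- `u` is a weak P-point of `ω*`: `u` is free and `u` is not in the closure
(in the Stone topology on ultrafilters) of any countable set of free
ultrafilters not containing `u`. -/
def IsWeakPPoint (u : Ultrafilter ℕ) : Prop :=
  IsFreeUltrafilter u ∧
    ∀ D : Set (Ultrafilter ℕ), D.Countable → (∀ v ∈ D, IsFreeUltrafilter v) →
      u ∉ D → u ∉ closure D

/-!
A weak P-point `u n` lies outside the closure of the countable set of the other `u m`, so some
`B n ∈ u n` belongs to none of them. Disjointifying, `B n \ ⋃ m < n, B m` still lies in `u n`,
since it removes only finitely many sets, none of which is in `u n`.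
-/

theorem Ultrafilter.exists_mem_forall_notMem_of_notMem_closure {α : Type*}
    {D : Set (Ultrafilter α)} {u : Ultrafilter α} (hu : u ∉ closure D) :
    ∃ s ∈ u, ∀ v ∈ D, s ∉ v := by
  contrapose! hu
  refine ultrafilterBasis_is_basis.mem_closure_iff.2 ?_
  rintro _ ⟨s, rfl⟩ hs
  obtain ⟨v, hvD, hsv⟩ := hu s hs
  exact ⟨v, hsv, hvD⟩

theorem IsWeakPPoint.exists_mem_forall_notMem {u : Ultrafilter ℕ} (hu : IsWeakPPoint u)
    {D : Set (Ultrafilter ℕ)} (hD : D.Countable) (hfree : ∀ v ∈ D, IsFreeUltrafilter v)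
    (huD : u ∉ D) : ∃ s ∈ u, ∀ v ∈ D, s ∉ v :=
  Ultrafilter.exists_mem_forall_notMem_of_notMem_closure (hu.2 D hD hfree huD)

theorem Ultrafilter.disjointed_mem {ι α : Type*} [Preorder ι] [LocallyFiniteOrderBot ι]
    {u : ι → Ultrafilter α} {s : ι → Set α} (hs : ∀ i, s i ∈ u i)
    (hsep : ∀ i j, j < i → s j ∉ u i) (i : ι) : disjointed s i ∈ u i := by
  rw [disjointed_eq_inter_compl]
  refine inter_mem (hs i) ((biInter_mem (finite_Iio i)).2 fun j hj => ?_)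
  exact compl_mem_iff_notMem.2 (hsep i j hj)

/-- every countable family of pairwise distinct weak P-points of `ω*`
is disjointly representable. -/
theorem stmt3 (u : ℕ → Ultrafilter ℕ) (hinj : Function.Injective u)
    (hwp : ∀ n, IsWeakPPoint (u n)) :
    ∃ A : ℕ → Set ℕ, (∀ n, A n ∈ u n) ∧ ∀ n m, n ≠ m → A n ∩ A m = ∅ := by
  have hsep : ∀ n, ∃ s ∈ u n, ∀ m, m ≠ n → s ∉ u m := fun n => by
    obtain ⟨s, hs, hsD⟩ := (hwp n).exists_mem_forall_notMem (D := range u \ {u n})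
      ((countable_range u).mono sdiff_subset)
      (by rintro _ ⟨⟨m, rfl⟩, -⟩; exact (hwp m).1)
      (notMem_sdiff_of_mem rfl)
    exact ⟨s, hs, fun m hmn => hsD (u m) ⟨mem_range_self m, (hinj.ne hmn :)⟩⟩
  choose B hB hBsep using hsep
  refine ⟨disjointed B, Ultrafilter.disjointed_mem hB fun n m hmn => hBsep m n hmn.ne', ?_⟩
  exact fun n m hnm => (disjoint_disjointed B hnm).inter_eq
end

section
/- If X is a locally countable, countably compact T₁ topological space of cardinality κ > 𝔠 (the continuum), then κ^ω = κ. -/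
/-!
Coding each `f : ℕ → X` by its finite initial segments (and `List X` back into `X`) gives an
almost disjoint family of `#X ^ ℵ₀` countably infinite subsets of `X`. Each has an accumulation
point `x`, and the member of the family is then recovered from `x` together with its trace on a
fixed countable neighbourhood of `x`: two distinct members with the same point and the same trace
would share the infinite trace. There are at most `#X * 𝔠 = #X` such pairs.
-/

open Cardinal Set Topology

universe u

section InitialSegments

variable {α : Type*}

def initialSegments (f : ℕ → α) : Set (List α) :=
  range fun n => List.ofFn fun i : Fin n => f i

lemma initialSegments_countable (f : ℕ → α) : (initialSegments f).Countable :=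
  countable_range _

lemma initialSegments_infinite (f : ℕ → α) : (initialSegments f).Infinite :=
  infinite_range_of_injective fun m n h => by simpa using congrArg List.length h

lemma initialSegments_inter_finite {f g : ℕ → α} (hfg : f ≠ g) :
    (initialSegments f ∩ initialSegments g).Finite := by
  obtain ⟨k, hk⟩ := Function.ne_iff.1 hfg
  refine ((finite_Iic k).image fun n => List.ofFn fun i : Fin n => f i).subset ?_
  rintro _ ⟨⟨n, rfl⟩, ⟨m, hm⟩⟩
  obtain rfl : m = n := by simpa using congrArg List.length hm
  refine ⟨m, mem_Iic.2 (not_lt.1 fun hkm => hk ?_), rfl⟩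
  exact (congrFun (List.ofFn_inj.1 hm) ⟨k, hkm⟩).symm

end InitialSegments

theorem exists_almostDisjoint_family (α : Type*) [Infinite α] :
    ∃ A : (ℕ → α) → Set α, (∀ f, (A f).Countable ∧ (A f).Infinite) ∧
      Pairwise fun f g => (A f ∩ A g).Finite := by
  obtain ⟨e⟩ := Cardinal.eq.1 (mk_list_eq_mk α)
  refine ⟨fun f => e '' initialSegments f, fun f => ⟨?_, ?_⟩, fun f g hfg => ?_⟩
  · exact (initialSegments_countable f).image e
  · exact (initialSegments_infinite f).image e.injective.injOn
  · show (e '' _ ∩ e '' _).Finite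
    rw [← image_inter e.injective]
    exact (initialSegments_inter_finite hfg).image e

theorem mk_le_mk_mul_continuum_of_almostDisjoint {X ι : Type u} [TopologicalSpace X]
    (hloc : ∀ x : X, ∃ U ∈ 𝓝 x, U.Countable) (A : ι → Set X)
    (hdisj : Pairwise fun i j => (A i ∩ A j).Finite)
    (hacc : ∀ i, ∃ x, ∀ U ∈ 𝓝 x, (U ∩ A i).Infinite) :
    #ι ≤ #X * 𝔠 := by
  have henum : ∀ x : X, ∃ g : ℕ → X, range g ∈ 𝓝 x := fun x => by
    obtain ⟨U, hU, hUc⟩ := hloc x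
    obtain ⟨g, rfl⟩ := hUc.exists_eq_range ⟨x, mem_of_mem_nhds hU⟩
    exact ⟨g, hU⟩
  choose g hg using henum
  choose x hx using hacc
  have hinj : Function.Injective fun i => (x i, g (x i) ⁻¹' A i) := by
    intro i j hij
    obtain ⟨hxij, hA⟩ := Prod.ext_iff.1 hij
    dsimp only at hxij hA
    rw [hxij] at hA
    by_contra hne
    have htrace : range (g (x j)) ∩ A i = range (g (x j)) ∩ A j := by
      rw [← image_preimage_eq_range_inter, hA, image_preimage_eq_range_inter]
    refine hx i _ (hg (x i)) ((hdisj hne).subset fun z hz => ⟨hz.2, ?_⟩)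
    rw [hxij] at hz
    exact (htrace ▸ hz).2
  calc #ι ≤ #(X × Set ℕ) := mk_le_of_injective hinj
    _ = #X * 𝔠 := by simp

theorem stmt4_general (X : Type*) [TopologicalSpace X]
    (hloc : ∀ x : X, ∃ U ∈ nhds x, U.Countable)
    (hcc : ∀ A : Set X, A.Countable → A.Infinite →
      ∃ x : X, ∀ U ∈ nhds x, (U ∩ A).Infinite)
    (hbig : Cardinal.continuum < #X) :
    #X ^ ℵ₀ = #X := by
  have hX : ℵ₀ ≤ #X := aleph0_le_continuum.trans hbig.le
  have : Infinite X := Cardinal.infinite_iff.2 hX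
  obtain ⟨A, hA, hdisj⟩ := exists_almostDisjoint_family X
  have hle : #(ℕ → X) ≤ #X * 𝔠 :=
    mk_le_mk_mul_continuum_of_almostDisjoint hloc A hdisj fun f => hcc _ (hA f).1 (hA f).2
  refine le_antisymm ?_ (self_le_power _ one_le_aleph0)
  calc #X ^ ℵ₀ = #(ℕ → X) := by simp
    _ ≤ #X * 𝔠 := hle
    _ = #X := mul_eq_left hX hbig.le continuum_ne_zero

/-- if `X` is a locally countable, countably compact T₁ space of
cardinality `κ > 𝔠`, then `κ^ω = κ`. -/
theorem stmt4 (X : Type*) [TopologicalSpace X] [T1Space X]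
    (hloc : ∀ x : X, ∃ U ∈ nhds x, U.Countable)
    (hcc : ∀ A : Set X, A.Countable → A.Infinite →
      ∃ x : X, ∀ U ∈ nhds x, (U ∩ A).Infinite)
    (hbig : Cardinal.continuum < #X) :
    #X ^ ℵ₀ = #X :=
  stmt4_general X hloc hcc hbig
end

section
/- If λ is a cardinal with cofinality ω, then there is an almost disjoint family 𝒜 ⊆ [λ]^ω of countably infinite subsets of λ with |𝒜| = λ^ω. -/
/-!
Since `λ` is infinite, `λ^{<ω}` has cardinality `λ`, so the finite sequences of elements of `λ`
can be coded injectively by ordinals below `λ`. Every `f : ℕ → λ` gives the countably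
infinite branch of codes of its initial segments. Two distinct `f`, `g` first differ at some `m`,
and their branches share only the codes of initial segments of length at most `m`. Hence these
`λ^ω` branches form an almost disjoint family.
-/

open Cardinal Set

theorem List.eq_of_map_range_eq {α : Type*} {f g : ℕ → α} {m n : ℕ}
    (h : (range m).map f = (range n).map g) : m = n := by
  simpa using congrArg List.length h

theorem List.apply_eq_of_map_range_eq {α : Type*} {f g : ℕ → α} {m n : ℕ}
    (h : (range m).map f = (range n).map g) {i : ℕ} (hi : i < m) : f i = g i := by
  have hi' : i < n := List.eq_of_map_range_eq h ▸ hi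
  simpa [List.getElem?_range hi, List.getElem?_range hi'] using congrArg (·[i]?) h

section CodedBranch

variable {α β : Type*} {c : List α → β}

def codedBranch (c : List α → β) (f : ℕ → α) : Set β :=
  range fun n => c ((List.range n).map f)

theorem codedBranch_countable (f : ℕ → α) : (codedBranch c f).Countable :=
  countable_range _

theorem codedBranch_infinite (hc : c.Injective) (f : ℕ → α) : (codedBranch c f).Infinite :=
  infinite_range_of_injective fun _ _ h => List.eq_of_map_range_eq (hc h)

theorem codedBranch_inter_finite (hc : c.Injective) {f g : ℕ → α} (hfg : f ≠ g) :
    (codedBranch c f ∩ codedBranch c g).Finite := by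
  obtain ⟨m, hm⟩ := Function.ne_iff.mp hfg
  refine ((finite_Iic m).image fun n => c ((List.range n).map f)).subset ?_
  rintro _ ⟨⟨n, rfl⟩, ⟨n', hn'⟩⟩
  refine ⟨n, mem_Iic.mpr (not_lt.mp fun hmn => hm ?_), rfl⟩
  exact (List.apply_eq_of_map_range_eq (hc hn') (List.eq_of_map_range_eq (hc hn') ▸ hmn)).symm

theorem codedBranch_injective (hc : c.Injective) : (codedBranch c).Injective := by
  intro f g hfg
  by_contra hne
  have := codedBranch_inter_finite hc hne
  rw [hfg, inter_self] at this
  exact codedBranch_infinite hc g this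

end CodedBranch

/-- Tarski: if `λ` is a cardinal of cofinality `ω`, then there is an
almost disjoint family of countably infinite subsets of `λ` of cardinality `λ^ω`. -/
theorem stmt5 (l : Cardinal.{0}) (hcof : l.ord.cof = ℵ₀) :
    ∃ 𝒜 : Set (Set Ordinal.{0}),
      (∀ A ∈ 𝒜, A ⊆ Set.Iio l.ord ∧ A.Countable ∧ A.Infinite) ∧
      (∀ A ∈ 𝒜, ∀ B ∈ 𝒜, A ≠ B → (A ∩ B).Finite) ∧
      #𝒜 = Cardinal.lift.{1} (l ^ ℵ₀) := by
  have hl : ℵ₀ ≤ l := by simpa [hcof] using Ordinal.cof_le_card l.ord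
  have : Infinite l.out := infinite_iff.mpr (by rwa [mk_out])
  obtain ⟨e⟩ : Nonempty (List l.out ↪ Iio l.ord) := by
    rw [← lift_mk_le', mk_list_eq_mk, mk_out, mk_Iio_ordinal, card_ord, lift_lift]
  have hc : (Subtype.val ∘ e).Injective := Subtype.val_injective.comp e.injective
  refine ⟨range (codedBranch (Subtype.val ∘ e)), ?_, ?_, ?_⟩
  · rintro _ ⟨f, rfl⟩
    refine ⟨?_, codedBranch_countable f, codedBranch_infinite hc f⟩
    rintro _ ⟨n, rfl⟩
    exact (e _).2
  · rintro _ ⟨f, rfl⟩ _ ⟨g, rfl⟩ hfg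
    exact codedBranch_inter_finite hc (ne_of_apply_ne _ hfg)
  · have h𝒜 := mk_range_eq_of_injective (codedBranch_injective hc)
    rw [lift_uzero] at h𝒜
    rw [h𝒜, mk_arrow, mk_out, mk_nat]
    simp
end

section
/- Every locally countable SAU space X has cardinality at most 2^𝔠. -/
/-!
Pick a non-isolated point `x` and a countable neighbourhood `U` of it. In a Hausdorff space a
point of `closure U` is determined by the subsets of `U` whose closure contains it, so
`F = closure U` is an infinite closed set of size at most `2 ^ 𝔠`. Covering `F` by countable open
sets gives an open `O ⊇ F` of size at most `2 ^ 𝔠`, and `Oᶜ` is finite, being a closed set that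
misses the infinite closed set `F`.
-/

open Cardinal Set

/-- A SAU (strongly anti-Urysohn) space: Hausdorff, with at least two non-isolated
points, in which any two infinite closed subsets intersect. -/
def IsSAU (X : Type*) [TopologicalSpace X] : Prop :=
  T2Space X ∧
    (∃ x y : X, x ≠ y ∧ ¬IsOpen ({x} : Set X) ∧ ¬IsOpen ({y} : Set X)) ∧
    ∀ F G : Set X, IsClosed F → IsClosed G → F.Infinite → G.Infinite →
      (F ∩ G).Nonempty

open Topology

theorem mk_closure_le_two_power_two_power {X : Type*} [TopologicalSpace X] [T2Space X]
    (s : Set X) : #(closure s) ≤ 2 ^ (2 : Cardinal) ^ #s := by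
  let trace : closure s → Set (Set s) := fun y => {A | (y : X) ∈ closure ((↑) '' A)}
  have trace_injective : Function.Injective trace := by
    intro y z hyz
    by_contra hne
    obtain ⟨U, V, hU, hV, hyU, hzV, hUV⟩ := t2_separation (Subtype.coe_ne_coe.mpr hne)
    have hUs : (↑) '' ((↑) ⁻¹' U : Set s) = U ∩ s := by
      rw [Subtype.image_preimage_coe, inter_comm]
    have hy : (↑) ⁻¹' U ∈ trace y := by
      change (y : X) ∈ closure _
      rw [hUs]
      exact hU.inter_closure ⟨hyU, y.2⟩
    have hz : (↑) ⁻¹' U ∉ trace z := by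
      change (z : X) ∉ closure _
      rw [hUs]
      exact fun hz => disjoint_left.mp (hUV.closure_left hV) (closure_mono inter_subset_left hz) hzV
    exact hz (hyz ▸ hy)
  calc #(closure s) ≤ #(Set (Set s)) := mk_le_of_injective trace_injective
    _ = 2 ^ (2 : Cardinal) ^ #s := by rw [mk_set, mk_set]

theorem Set.Countable.mk_closure_le_two_power_continuum {X : Type*} [TopologicalSpace X]
    [T2Space X] {s : Set X} (hs : s.Countable) : #(closure s) ≤ 2 ^ 𝔠 :=
  calc #(closure s) ≤ 2 ^ (2 : Cardinal) ^ #s := mk_closure_le_two_power_two_power s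
    _ ≤ 2 ^ (2 : Cardinal) ^ ℵ₀ :=
      power_le_power_left two_ne_zero (power_le_power_left two_ne_zero hs.le_aleph0)
    _ = 2 ^ 𝔠 := by rw [two_power_aleph0]

theorem exists_isOpen_superset_mk_le_mul_aleph0 {X : Type*} [TopologicalSpace X]
    (hloc : ∀ x : X, ∃ U ∈ 𝓝 x, U.Countable) (s : Set X) :
    ∃ O, IsOpen O ∧ s ⊆ O ∧ #O ≤ #s * ℵ₀ := by
  choose W hW hWc using hloc
  refine ⟨⋃ x ∈ s, interior (W x), isOpen_biUnion fun _ _ => isOpen_interior,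
    fun x hx => mem_biUnion hx (mem_interior_iff_mem_nhds.mpr (hW x)), ?_⟩
  calc #(⋃ x ∈ s, interior (W x)) ≤ #s * ⨆ x : s, #(interior (W x)) := mk_biUnion_le _ _
    _ ≤ #s * ℵ₀ := mul_le_mul' le_rfl
        (ciSup_le' fun x => ((hWc x).mono interior_subset).le_aleph0)

theorem finite_compl_of_infinite_isClosed_subset {X : Type*} [TopologicalSpace X]
    (h : ∀ F G : Set X, IsClosed F → IsClosed G → F.Infinite → G.Infinite → (F ∩ G).Nonempty)
    {F O : Set X} (hF : IsClosed F) (hFinf : F.Infinite) (hO : IsOpen O) (hFO : F ⊆ O) :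
    Oᶜ.Finite := by
  by_contra hinf
  obtain ⟨x, hxF, hxO⟩ := h F Oᶜ hF hO.isClosed_compl hFinf hinf
  exact hxO (hFO hxF)

/-- every locally countable SAU space has cardinality at most `2^𝔠`. -/
theorem stmt6 (X : Type*) [TopologicalSpace X] (hSAU : IsSAU X)
    (hloc : ∀ x : X, ∃ U ∈ nhds x, U.Countable) :
    #X ≤ 2 ^ Cardinal.continuum := by
  obtain ⟨hT2, ⟨x, -, -, hx, -⟩, hclosed_meet⟩ := hSAU
  have : (𝓝[≠] x).NeBot := ⟨fun h => hx ((isOpen_singleton_iff_punctured_nhds x).mpr h)⟩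
  obtain ⟨U, hU, hUc⟩ := hloc x
  have hFinf : (closure U).Infinite := (infinite_of_mem_nhds x hU).mono subset_closure
  obtain ⟨O, hO, hFO, hOcard⟩ := exists_isOpen_superset_mk_le_mul_aleph0 hloc (closure U)
  have hcompl : Oᶜ.Finite :=
    finite_compl_of_infinite_isClosed_subset hclosed_meet isClosed_closure hFinf hO hFO
  have haleph0 : ℵ₀ ≤ 2 ^ 𝔠 := aleph0_le_continuum.trans (cantor 𝔠).le
  rw [← mk_sum_compl O]
  refine add_le_of_le haleph0 ?_ (hcompl.countable.le_aleph0.trans haleph0)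
  calc #O ≤ #(closure U) * ℵ₀ := hOcard
    _ ≤ 2 ^ 𝔠 := mul_le_of_le haleph0 hUc.mk_closure_le_two_power_continuum haleph0
end

section
/- Suppose κ is an uncountable cardinal such that there exists an ω-hitting family ℋ ⊆ [κ]^ω with |ℋ| = λ, i.e., for every A ∈ [κ]^ω there is H ∈ ℋ with |A ∩ H| = ω. Then there is a family 𝒞 ⊆ [κ]^ω with |𝒞| ≤ λ that is cofinal in ([κ]^ω, ⊆), i.e., every countable subset of κ is contained in a member of 𝒞. -/
/-!
Code finite subsets of `K` by points of `K` through a bijection `e : Finset K ≃ K`, and replace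
each `h ∈ ℋ` by the union of the finite sets its points code. To cover a countable `A`, write it
inside the union of a strictly increasing sequence of finite sets `s n` and hit the infinite set
of codes `e (s n)` with some `h ∈ ℋ`: then `h` contains codes of `s n` for arbitrarily large
`n`, so the union attached to `h` contains every `s n`, hence `A`.
-/

open Cardinal Set

universe u

variable {α : Type*}

def codedUnion (e : Finset α ≃ α) (h : Set α) : Set α :=
  ⋃ x ∈ h, (e.symm x : Set α)

theorem Set.Countable.codedUnion {h : Set α} (hh : h.Countable) (e : Finset α ≃ α) :
    (codedUnion e h).Countable :=
  hh.biUnion fun x _ => (e.symm x).countable_toSet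

theorem Set.Infinite.codedUnion {h : Set α} (hh : h.Infinite) (e : Finset α ≃ α) :
    (codedUnion e h).Infinite :=
  hh.biUnion fun _ _ _ _ hxy => e.symm.injective (Finset.coe_injective hxy)

theorem Monotone.iUnion_subset_biUnion_of_infinite {s : ℕ → Set α} (hs : Monotone s)
    {N : Set ℕ} (hN : N.Infinite) : ⋃ n, s n ⊆ ⋃ n ∈ N, s n := by
  refine iUnion_subset fun k => ?_
  obtain ⟨n, hnN, hkn⟩ := hN.exists_gt k
  exact (hs hkn.le).trans (subset_biUnion_of_mem hnN)

theorem iUnion_subset_codedUnion {e : Finset α ≃ α} {s : ℕ → Finset α} (hs : StrictMono s)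
    {h : Set α} (hh : (range (e ∘ s) ∩ h).Infinite) :
    ⋃ n, (s n : Set α) ⊆ codedUnion e h := by
  have hN : {n | e (s n) ∈ h}.Infinite := by
    rw [← image_univ, ← image_inter_preimage, univ_inter] at hh
    exact hh.of_image _
  exact (hs.monotone.iUnion_subset_biUnion_of_infinite (s := fun n => (s n : Set α)) hN).trans
    (iUnion₂_subset fun n hn x hx => mem_biUnion hn (by rwa [Equiv.symm_apply_apply]))

theorem Set.Countable.exists_strictMono_finset_cover [Infinite α] {A : Set α}
    (hA : A.Countable) : ∃ s : ℕ → Finset α, StrictMono s ∧ A ⊆ ⋃ n, (s n : Set α) := by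
  let u := _root_.Infinite.natEmbedding α
  set B := A ∪ range u
  have hB : B.Infinite := (infinite_range_of_injective u.injective).mono subset_union_right
  obtain ⟨_⟩ := nonempty_denumerable_iff.2
    ⟨(hA.union (countable_range u)).to_subtype, hB.to_subtype⟩
  let f : ℕ ↪ α := (Denumerable.eqv B).symm.toEmbedding.trans (Function.Embedding.subtype _)
  refine ⟨fun n => (Finset.range n).map f, fun m n hmn => ?_, fun a ha => ?_⟩
  · exact Finset.map_ssubset_map.2 (Finset.strictMono_range hmn)
  · refine mem_iUnion.2 ⟨Denumerable.eqv B ⟨a, Or.inl ha⟩ + 1, ?_⟩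
    simpa [f] using ⟨_, le_rfl, by simp⟩

/-- if `κ` is an uncountable cardinal (here realized as the cardinality
of a type `K`) and `ℋ ⊆ [κ]^ω` is an ω-hitting family of cardinality `λ`, then
there is a family `𝒞 ⊆ [κ]^ω` of cardinality at most `λ` that is cofinal in
`([κ]^ω, ⊆)`. -/
theorem stmt9 (K : Type u) (hK : ℵ₀ < #K) (lam : Cardinal.{u})
    (H : Set (Set K)) (hHmem : ∀ h ∈ H, h.Countable ∧ h.Infinite)
    (hHcard : #H = lam)
    (hhit : ∀ A : Set K, A.Countable → A.Infinite →
      ∃ h ∈ H, (A ∩ h).Infinite) :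
    ∃ C : Set (Set K), #C ≤ lam ∧
      (∀ c ∈ C, c.Countable ∧ c.Infinite) ∧
      ∀ A : Set K, A.Countable → ∃ c ∈ C, A ⊆ c := by
  have : Infinite K := Cardinal.infinite_iff.2 hK.le
  obtain ⟨e⟩ : Nonempty (Finset K ≃ K) := Cardinal.eq.1 (mk_finset_of_infinite K)
  refine ⟨codedUnion e '' H, mk_image_le.trans hHcard.le, ?_, fun A hA => ?_⟩
  · rintro _ ⟨h, hh, rfl⟩
    exact ⟨(hHmem h hh).1.codedUnion e, (hHmem h hh).2.codedUnion e⟩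
  · obtain ⟨s, hs, hAs⟩ := hA.exists_strictMono_finset_cover
    obtain ⟨h, hh, hhs⟩ := hhit (range (e ∘ s)) (countable_range _)
      (infinite_range_of_injective (e.injective.comp hs.injective))
    exact ⟨_, mem_image_of_mem _ hh, hAs.trans (iUnion_subset_codedUnion hs hhs)⟩
end
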